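/- arXiv:1803.04452 — 3 statements merged into one kernel-verified Lean document; each statement's English description precedes it below -/
import Mathlib

section
/- Let G^X = (V, E^X, s) be an extraction order of a directed graph G whose underlying undirected graph is a cactus graph (every two distinct simple cycles share at most one vertex). Then for every edge e ∈ E^X, the label set of e has cardinality at most 1. Consequently, the extraction width of G^X (one plus the maximal number of labels in any edge bag) is at most 2. -/
/-- The list of consecutive edges traversed by a path given as a list of vertices. -/
def pathEdges {V : Type*} (p : List V) : List (V × V) := p.zip p.tail

/-- A (simple) directed path from `a` to `b` in the edge set `E`, given as the
nonempty list of visited vertices. -/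
def IsPath {V : Type*} (E : Finset (V × V)) (a b : V) (p : List V) : Prop :=
  p ≠ [] ∧ p.head? = some a ∧ p.getLast? = some b ∧ p.Nodup ∧
    ∀ e ∈ pathEdges p, e ∈ E

/-- An extraction order: a rooted DAG in which every vertex is reachable from the root. -/
structure ExtractionOrder (V : Type*) where
  E : Finset (V × V)
  root : V
  reach : ∀ v : V, ∃ p : List V, IsPath E root v p
  acyclic : ∀ u v : V, (u, v) ∈ E → ¬ ∃ p : List V, IsPath E v u p

/-- A confluence from `i` to `j`: two distinct directed paths from `i` to `j`
that are vertex-disjoint except at their shared endpoints. -/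
def IsConfluence {V : Type*} (E : Finset (V × V)) (i j : V) (p₁ p₂ : List V) : Prop :=
  i ≠ j ∧ p₁ ≠ p₂ ∧ IsPath E i j p₁ ∧ IsPath E i j p₂ ∧
    ∀ v, v ∈ p₁ → v ∈ p₂ → v = i ∨ v = j

/-- The edge `e` is labeled with `j` iff some confluence with target `j` contains `e`. -/
def IsLabeled {V : Type*} (E : Finset (V × V)) (e : V × V) (j : V) : Prop :=
  ∃ i p₁ p₂, IsConfluence E i j p₁ p₂ ∧ (e ∈ pathEdges p₁ ∨ e ∈ pathEdges p₂)

/-- The edge `e` lies on some directed path from `i` to `j`. -/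
def OnPath {V : Type*} (E : Finset (V × V)) (i j : V) (e : V × V) : Prop :=
  ∃ p, IsPath E i j p ∧ e ∈ pathEdges p

/-- The label set of an edge. -/
def labelSet {V : Type*} (E : Finset (V × V)) (e : V × V) : Set V :=
  {j | IsLabeled E e j}

/-- Two edges lie in the same edge bag (of the common tail `e.1`) iff they are linked by a
chain of outgoing edges of `e.1` with pairwise intersecting label sets. -/
def inSameBag {V : Type*} (E : Finset (V × V)) (e e' : V × V) : Prop :=
  Relation.ReflTransGen
    (fun a b => a ∈ E ∧ b ∈ E ∧ a.1 = e.1 ∧ b.1 = e.1 ∧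
      (labelSet E a ∩ labelSet E b).Nonempty) e e'

/-- The union of the label sets of the edges in the bag of `e`. -/
def bagLabels {V : Type*} (E : Finset (V × V)) (e : V × V) : Set V :=
  {j | ∃ e', inSameBag E e e' ∧ IsLabeled E e' j}

/-- The width of an extraction order: one plus the maximal number of labels in any edge bag. -/
noncomputable def widthX {V : Type*} (X : ExtractionOrder V) : ℕ :=
  1 + X.E.sup (fun e => (bagLabels X.E e).ncard)

/-- `EX` is obtained from `E` by possibly reversing the orientation of some edges. -/
def IsOrientationOf {V : Type*} (EX E : Finset (V × V)) : Prop :=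
  (∀ u v : V, (u, v) ∈ EX → (u, v) ∈ E ∨ (v, u) ∈ E) ∧
  (∀ u v : V, (u, v) ∈ E → (u, v) ∈ EX ∨ (v, u) ∈ EX)

/-- The extraction width of a directed graph: the minimum width over all its extraction orders. -/
noncomputable def extractionWidth {V : Type*} (E : Finset (V × V)) : ℕ :=
  sInf {w | ∃ X : ExtractionOrder V, IsOrientationOf X.E E ∧ widthX X = w}

/-- The underlying undirected simple graph of a directed edge set. -/
def underlying {V : Type*} (E : Finset (V × V)) : SimpleGraph V where
  Adj u v := u ≠ v ∧ ((u, v) ∈ E ∨ (v, u) ∈ E)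
  symm := ⟨by intro u v h; exact ⟨h.1.symm, h.2.elim Or.inr Or.inl⟩⟩
  loopless := ⟨by intro u h; exact h.1 rfl⟩

/-- A cactus graph: a connected graph in which any two distinct simple cycles share at
most one vertex. -/
def IsCactus {V : Type*} [DecidableEq V] (G : SimpleGraph V) : Prop :=
  G.Connected ∧
    ∀ (u v : V) (c : G.Walk u u) (c' : G.Walk v v), c.IsCycle → c'.IsCycle →
      c.edges.toFinset ≠ c'.edges.toFinset →
        ∀ a b : V, a ∈ c.support → a ∈ c'.support → b ∈ c.support → b ∈ c'.support → a = b

/-!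
A confluence with target `j` closes up, in the underlying graph, into a cycle carrying all of its
edges. If an edge had two labels `j` and `j'`, the two cycles would share both endpoints of that
edge, so in a cactus they have the same edges. An acyclic edge set never contains both `(u, v)` and
`(v, u)`, so the two confluences then have the same directed edges; and the target of a confluence
is the unique sink of its directed edges, hence `j = j'`. Once label sets are subsingletons, two
intersecting label sets are equal, so every edge bag carries at most one label.
-/

open SimpleGraph

section

variable {V : Type*}

lemma isChain_iff_forall_mem_pathEdges {R : V → V → Prop} {p : List V} :
    p.IsChain R ↔ ∀ e ∈ pathEdges p, R e.1 e.2 := by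
  induction p with
  | nil => simp [pathEdges]
  | cons a t ih => cases t <;> simp_all [pathEdges]

lemma exists_mem_pathEdges_fst_iff {p : List V} {v : V} :
    (∃ w, (v, w) ∈ pathEdges p) ↔ v ∈ p.dropLast := by
  induction p with
  | nil => simp [pathEdges]
  | cons a t ih => cases t <;> simp_all [pathEdges, exists_or]

lemma exists_mem_pathEdges_snd_iff {p : List V} {v : V} :
    (∃ u, (u, v) ∈ pathEdges p) ↔ v ∈ p.tail := by
  induction p with
  | nil => simp [pathEdges]
  | cons a t ih => cases t <;> simp_all [pathEdges, exists_or]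

namespace IsPath

variable {E : Finset (V × V)} {i j v : V} {p : List V}

lemma mem_tail_iff (hP : IsPath E i j p) : v ∈ p.tail ↔ v ∈ p ∧ v ≠ i := by
  obtain ⟨-, hh, -, hnd, -⟩ := hP
  cases p with
  | nil => simp at hh
  | cons a t =>
    simp only [List.head?_cons, Option.some.injEq] at hh
    subst hh
    grind

lemma mem_dropLast_iff (hP : IsPath E i j p) : v ∈ p.dropLast ↔ v ∈ p ∧ v ≠ j := by
  obtain ⟨hne, -, hl, hnd, -⟩ := hP
  rw [List.getLast?_eq_some_getLast hne, Option.some.injEq] at hl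
  rw [← List.dropLast_concat_getLast hne, hl] at hnd ⊢
  grind

lemma exists_walk (hP : IsPath E i j p) :
    ∃ w : (underlying E).Walk i j, w.IsPath ∧ w.support = p ∧
      w.edges = (pathEdges p).map Sym2.mk.uncurry := by
  obtain ⟨hne, hh, hl, hnd, hE⟩ := hP
  have hchain : p.IsChain (underlying E).Adj :=
    isChain_iff_forall_mem_pathEdges.2 fun e he =>
      ⟨isChain_iff_forall_mem_pathEdges.1 hnd.isChain e he, Or.inl (hE e he)⟩
  rw [List.head?_eq_some_head hne, Option.some.injEq] at hh
  rw [List.getLast?_eq_some_getLast hne, Option.some.injEq] at hl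
  refine ⟨(Walk.ofSupport p hne hchain).copy hh hl, ?_, ?_, ?_⟩
  · simpa [Walk.isPath_def] using hnd
  · simp
  · simp [Walk.edges_eq_zipWith_support, pathEdges, List.map_uncurry_zip_eq_zipWith]

end IsPath

lemma IsConfluence.exists_isCycle {E : Finset (V × V)} {i j : V} {p₁ p₂ : List V}
    (h : IsConfluence E i j p₁ p₂) :
    ∃ c : (underlying E).Walk i i, c.IsCycle ∧
      ∀ s, s ∈ c.edges ↔ s ∈ (pathEdges p₁ ++ pathEdges p₂).map Sym2.mk.uncurry := by
  obtain ⟨-, hne, hP₁, hP₂, hdisj⟩ := h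
  obtain ⟨w₁, hw₁, hs₁, he₁⟩ := hP₁.exists_walk
  obtain ⟨w₂, hw₂, hs₂, he₂⟩ := hP₂.exists_walk
  refine ⟨w₁.append w₂.reverse, hw₁.isCycle_append hw₂.reverse ?_ ?_, fun s => ?_⟩
  · rw [Walk.support_reverse, hs₁, hs₂, List.tail_reverse]
    intro v hv₁ hv₂
    rw [List.mem_reverse, hP₂.mem_dropLast_iff] at hv₂
    rw [hP₁.mem_tail_iff] at hv₁
    rcases hdisj v hv₁.1 hv₂.1 with rfl | rfl
    exacts [hv₁.2 rfl, hv₂.2 rfl]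
  · by_contra! hlen
    rw [Walk.length_reverse] at hlen
    exact hne (by rw [← hs₁, ← hs₂, Walk.eq_of_length_le_one hlen.1 hlen.2])
  · simp [Walk.edges_append, Walk.edges_reverse, he₁, he₂]

lemma mem_of_mk_mem_map_mk {E : Finset (V × V)} (hE : ∀ u v, (u, v) ∈ E → (v, u) ∉ E)
    {L : List (V × V)} (hL : ∀ f ∈ L, f ∈ E) {f : V × V} (hf : f ∈ E)
    (h : Sym2.mk.uncurry f ∈ L.map Sym2.mk.uncurry) : f ∈ L := by
  obtain ⟨g, hg, hgf⟩ := List.mem_map.1 h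
  rcases Sym2.mk_eq_mk_iff.1 hgf with rfl | rfl
  · exact hg
  · exact absurd (hL _ hg) (hE _ _ hf)

lemma mem_iff_of_mem_map_mk_iff {E : Finset (V × V)} (hE : ∀ u v, (u, v) ∈ E → (v, u) ∉ E)
    {L L' : List (V × V)} (hL : ∀ f ∈ L, f ∈ E) (hL' : ∀ f ∈ L', f ∈ E)
    (h : ∀ s, s ∈ L.map Sym2.mk.uncurry ↔ s ∈ L'.map Sym2.mk.uncurry) (f : V × V) :
    f ∈ L ↔ f ∈ L' :=
  ⟨fun hf => mem_of_mk_mem_map_mk hE hL' (hL f hf) ((h _).1 (List.mem_map_of_mem hf)),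
    fun hf => mem_of_mk_mem_map_mk hE hL (hL' f hf) ((h _).2 (List.mem_map_of_mem hf))⟩

def IsSink (L : List (V × V)) (v : V) : Prop :=
  (∃ u, (u, v) ∈ L) ∧ ∀ w, (v, w) ∉ L

lemma IsConfluence.isSink_iff {E : Finset (V × V)} {i j v : V} {p₁ p₂ : List V}
    (h : IsConfluence E i j p₁ p₂) : IsSink (pathEdges p₁ ++ pathEdges p₂) v ↔ v = j := by
  obtain ⟨hij, -, hP₁, hP₂, -⟩ := h
  have hj : j ∈ p₁ := List.mem_of_getLast? hP₁.2.2.1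
  simp only [IsSink, List.mem_append, exists_or, ← not_exists, not_or, forall_and,
    exists_mem_pathEdges_snd_iff, exists_mem_pathEdges_fst_iff, hP₁.mem_tail_iff,
    hP₂.mem_tail_iff, hP₁.mem_dropLast_iff, hP₂.mem_dropLast_iff]
  grind

lemma IsConfluence.mem_of_mem_pathEdges {E : Finset (V × V)} {i j : V} {p₁ p₂ : List V}
    (h : IsConfluence E i j p₁ p₂) : ∀ f ∈ pathEdges p₁ ++ pathEdges p₂, f ∈ E := by
  obtain ⟨-, -, ⟨-, -, -, -, h₁⟩, ⟨-, -, -, -, h₂⟩, -⟩ := h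
  exact fun f hf => (List.mem_append.1 hf).elim (h₁ f) (h₂ f)

lemma IsLabeled.eq_of_isCactus [DecidableEq V] {E : Finset (V × V)}
    (hc : IsCactus (underlying E)) (hE : ∀ u v, (u, v) ∈ E → (v, u) ∉ E) {a b j j' : V}
    (h : IsLabeled E (a, b) j) (h' : IsLabeled E (a, b) j') : j = j' := by
  obtain ⟨i, p₁, p₂, hP, he⟩ := h
  obtain ⟨i', q₁, q₂, hQ, he'⟩ := h'
  obtain ⟨c, hc₁, hcE⟩ := hP.exists_isCycle
  obtain ⟨c', hc₁', hcE'⟩ := hQ.exists_isCycle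
  replace he := List.mem_append.2 he
  replace he' := List.mem_append.2 he'
  have hab : a ≠ b := by
    rintro rfl
    exact hE a a (hP.mem_of_mem_pathEdges _ he) (hP.mem_of_mem_pathEdges _ he)
  have hmk : s(a, b) ∈ c.edges := (hcE _).2 (List.mem_map_of_mem he)
  have hmk' : s(a, b) ∈ c'.edges := (hcE' _).2 (List.mem_map_of_mem he')
  have hcc' : c.edges.toFinset = c'.edges.toFinset := by
    by_contra hne
    exact hab (hc.2 i i' c c' hc₁ hc₁' hne a b
      (c.fst_mem_support_of_mem_edges hmk) (c'.fst_mem_support_of_mem_edges hmk')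
      (c.snd_mem_support_of_mem_edges hmk) (c'.snd_mem_support_of_mem_edges hmk'))
  have hsame := mem_iff_of_mem_map_mk_iff hE hP.mem_of_mem_pathEdges hQ.mem_of_mem_pathEdges
    fun s => by rw [← hcE, ← hcE', ← List.mem_toFinset, hcc', List.mem_toFinset]
  have hsink : IsSink (pathEdges p₁ ++ pathEdges p₂) j' := by
    simpa only [IsSink, hsame] using hQ.isSink_iff.2 rfl
  exact (hP.isSink_iff.1 hsink).symm

lemma ExtractionOrder.not_mem_swap (X : ExtractionOrder V) {u v : V} (h : (u, v) ∈ X.E) :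
    (v, u) ∉ X.E := by
  intro h'
  rcases eq_or_ne u v with rfl | huv
  · exact X.acyclic u u h ⟨[u], by simp, rfl, rfl, List.nodup_singleton u, by simp [pathEdges]⟩
  · exact X.acyclic u v h ⟨[v, u], by simp, rfl, rfl, by simp [huv.symm], by simpa [pathEdges]⟩

lemma underlying_eq_of_isOrientationOf {EX E : Finset (V × V)} (h : IsOrientationOf EX E) :
    underlying EX = underlying E := by
  ext u v
  constructor
  · rintro ⟨huv, h' | h'⟩
    · exact ⟨huv, h.1 u v h'⟩
    · exact ⟨huv, (h.1 v u h').symm⟩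
  · rintro ⟨huv, h' | h'⟩
    · exact ⟨huv, h.2 u v h'⟩
    · exact ⟨huv, (h.2 v u h').symm⟩

lemma bagLabels_subset_labelSet {E : Finset (V × V)}
    (h : ∀ e, (labelSet E e).Subsingleton) (e : V × V) : bagLabels E e ⊆ labelSet E e := by
  rintro j ⟨e', he', hj⟩
  induction he' generalizing j with
  | refl => exact hj
  | tail _ hstep ih =>
    obtain ⟨-, -, -, -, x, hx, hx'⟩ := hstep
    exact h _ hj hx' ▸ ih hx

lemma widthX_le_two (X : ExtractionOrder V) (h : ∀ e, (labelSet X.E e).Subsingleton) :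
    widthX X ≤ 2 := by
  have hbag : ∀ e ∈ X.E, (bagLabels X.E e).ncard ≤ 1 := fun e _ => by
    have hs := (h e).anti (bagLabels_subset_labelSet h e)
    exact (Set.ncard_le_one_iff hs.finite).2 fun ha hb => hs ha hb
  unfold widthX
  have := Finset.sup_le hbag
  omega

end

/-- For an extraction order of a directed graph whose underlying undirected
graph is a cactus, every edge has at most one label; hence the width is at most 2. -/
theorem stmt3 {V : Type*} [DecidableEq V] (E : Finset (V × V))
    (hc : IsCactus (underlying E))
    (X : ExtractionOrder V) (hX : IsOrientationOf X.E E) :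
    (∀ e ∈ X.E, (labelSet X.E e).Subsingleton) ∧ widthX X ≤ 2 := by
  rw [← underlying_eq_of_isOrientationOf hX] at hc
  have hlabel : ∀ e, (labelSet X.E e).Subsingleton := fun _ _ hj _ hj' =>
    IsLabeled.eq_of_isCactus hc (fun _ _ => X.not_mem_swap) hj hj'
  exact ⟨fun e _ => hlabel e, widthX_le_two X hlabel⟩
end

section
/- Consider the 'half wheel' graph with center w_c and outer path w_1, w_2, ..., w_n, where the center is joined to each outer vertex and consecutive outer vertices are joined. For any extraction order G^X of this graph rooted at w_c (so all edges (w_c, w_k) are oriented away from w_c), let VC = { w_k : the path edge from w_{k-1} to w_k or from w_{k+1} to w_k is oriented toward w_k in G^X }. Then the extraction width of G^X equals |VC| + 1; moreover, the labels appearing on edges of G^X are exactly the vertices of VC, and they all belong to a single edge bag of w_c. -/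
/-- The half wheel graph on center `none` and outer path `some 0, …, some (n-1)`:
spokes from the center to every outer vertex, and path edges between consecutive
outer vertices. -/
def halfWheel (n : ℕ) : Finset (Option (Fin n) × Option (Fin n)) :=
  (Finset.univ.image fun k : Fin n => ((none : Option (Fin n)), some k)) ∪
  ((Finset.univ : Finset (Fin n × Fin n)).filter
      (fun p => (p.2 : ℕ) = (p.1 : ℕ) + 1)).image (fun p => (some p.1, some p.2))

/-- The set `VC` of outer vertices having an incoming path edge in the extraction order. -/
def halfWheelVC (n : ℕ) (X : ExtractionOrder (Option (Fin n))) : Finset (Fin n) :=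
  Finset.univ.filter
    (fun k => ∃ l : Fin n, ((k : ℕ) = (l : ℕ) + 1 ∨ (l : ℕ) = (k : ℕ) + 1) ∧
      (some l, some k) ∈ X.E)


/-! ### Auxiliary lemmas -/

lemma pathEdges_get {V : Type*} (p : List V) (i : ℕ) (h : i + 1 < p.length) :
    (p.get ⟨i, by omega⟩, p.get ⟨i+1, h⟩) ∈ pathEdges p := by
  have hlen : (p.zip p.tail).length = p.length - 1 := by
    simp [List.length_zip, List.length_tail]
  have hi : i < (p.zip p.tail).length := by omega
  have h2 : (p.zip p.tail).get ⟨i, hi⟩ = (p.get ⟨i, by omega⟩, p.get ⟨i+1, h⟩) := by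
    simp only [List.get_eq_getElem, List.getElem_zip]
    congr 1
    simp [List.getElem_tail]
  rw [pathEdges, ← h2]
  exact List.get_mem _ _

lemma IsPath.head_get {V : Type*} {E : Finset (V × V)} {i j : V} {p : List V}
    (hp : IsPath E i j p) : ∀ h : 0 < p.length, p.get ⟨0, h⟩ = i := by
  intro h
  have hne := hp.1
  have := hp.2.1
  rw [List.head?_eq_head hne] at this
  simpa [List.head_eq_getElem] using this

lemma IsPath.last_get {V : Type*} {E : Finset (V × V)} {i j : V} {p : List V}
    (hp : IsPath E i j p) : ∀ h : p.length - 1 < p.length, p.get ⟨p.length - 1, h⟩ = j := by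
  intro h
  have hne := hp.1
  have := hp.2.2.1
  rw [List.getLast?_eq_getLast hne] at this
  simpa [List.getLast_eq_getElem] using this

lemma last_edge {V : Type*} {E : Finset (V × V)} {i j : V} {p : List V}
    (hp : IsPath E i j p) (hij : i ≠ j) :
    ∃ a, (a, j) ∈ E ∧ a ∈ p ∧ a ≠ j ∧ (a = i → p = [i, j]) := by
  have hne := hp.1
  have hnd := hp.2.2.2.1
  have hlen1 : 1 ≤ p.length := List.length_pos_iff.2 hne
  have hlen2 : 2 ≤ p.length := by
    by_contra hc
    have hl : p.length = 1 := by omega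
    have h0 : 0 < p.length := by omega
    have := hp.head_get h0
    have h2 := hp.last_get (by omega)
    apply hij
    rw [← this, ← h2]
    congr 1
    omega
  set m := p.length with hm
  have hmem : (p.get ⟨m-2, by omega⟩, p.get ⟨m-2+1, by omega⟩) ∈ pathEdges p :=
    pathEdges_get p (m-2) (by omega)
  have hgj : p.get ⟨m-2+1, by omega⟩ = j := by
    have := hp.last_get (by omega)
    rw [← this]
    congr 1
    rw [Fin.mk.injEq]; omega
  refine ⟨p.get ⟨m-2, by omega⟩, ?_, List.get_mem _ _, ?_, ?_⟩
  · exact hp.2.2.2.2 _ (hgj ▸ hmem)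
  · intro hc
    have hgj2 : p.get ⟨m-1, by omega⟩ = j := hp.last_get (by omega)
    have heq : (⟨m-2, by omega⟩ : Fin p.length) = ⟨m-1, by omega⟩ :=
      List.nodup_iff_injective_get.mp hnd (by rw [hc, hgj2])
    have := Fin.mk.injEq (n := p.length) (m-2) (by omega) (m-1) (by omega) ▸ heq
    omega
  · intro hc
    have h0 : p.get ⟨0, by omega⟩ = i := hp.head_get (by omega)
    have heq : (⟨m-2, by omega⟩ : Fin p.length) = ⟨0, by omega⟩ :=
      List.nodup_iff_injective_get.mp hnd (by rw [hc, h0])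
    have hm2 : m = 2 := by
      have := Fin.mk.injEq (n := p.length) (m-2) (by omega) 0 (by omega) ▸ heq
      omega
    apply List.ext_get (by rw [← hm, hm2]; rfl)
    intro k h1 h2
    simp only [← hm, hm2] at h1
    interval_cases k
    · simpa using hp.head_get (by omega)
    · have : p.get ⟨1, by omega⟩ = j := by
        have := hp.last_get (by omega)
        rw [← this]
        congr 1
        rw [Fin.mk.injEq]; omega
      simpa using this

lemma mem_halfWheel {n : ℕ} (e : Option (Fin n) × Option (Fin n)) :
    e ∈ halfWheel n ↔ (∃ k : Fin n, e = (none, some k)) ∨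
      ∃ k l : Fin n, (l:ℕ) = (k:ℕ) + 1 ∧ e = (some k, some l) := by
  simp only [halfWheel, Finset.mem_union, Finset.mem_image, Finset.mem_filter,
    Finset.mem_univ, true_and]
  constructor
  · rintro (⟨k, hk⟩ | ⟨⟨k, l⟩, hl, he⟩)
    · exact Or.inl ⟨k, hk.symm⟩
    · exact Or.inr ⟨k, l, hl, he.symm⟩
  · rintro (⟨k, hk⟩ | ⟨k, l, hl, he⟩)
    · exact Or.inl ⟨k, hk.symm⟩
    · exact Or.inr ⟨(k, l), hl, he.symm⟩

section HalfWheelFacts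

variable {n : ℕ} {X : ExtractionOrder (Option (Fin n))}
  (hor : IsOrientationOf X.E (halfWheel n)) (hroot : X.root = none)

set_option linter.unusedSectionVars false

include hor hroot

lemma no_in_root (v : Option (Fin n)) : (v, (none : Option (Fin n))) ∉ X.E := by
  intro h
  exact X.acyclic _ _ h (hroot ▸ X.reach v)

lemma spoke_mem (k : Fin n) : ((none : Option (Fin n)), some k) ∈ X.E := by
  have hmem : ((none : Option (Fin n)), some k) ∈ halfWheel n :=
    (mem_halfWheel _).2 (Or.inl ⟨k, rfl⟩)
  rcases hor.2 _ _ hmem with h | h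
  · exact h
  · exact absurd h (no_in_root hor hroot _)

lemma edge_structure {u v : Option (Fin n)} (h : (u, v) ∈ X.E) :
    (∃ k : Fin n, u = none ∧ v = some k) ∨
      ∃ k l : Fin n, u = some l ∧ v = some k ∧ ((k:ℕ) = (l:ℕ) + 1 ∨ (l:ℕ) = (k:ℕ) + 1) := by
  rcases hor.1 _ _ h with h1 | h1
  · rcases (mem_halfWheel _).1 h1 with ⟨k, hk⟩ | ⟨k, l, hl, he⟩
    · exact Or.inl ⟨k, congrArg Prod.fst hk, congrArg Prod.snd hk⟩
    · exact Or.inr ⟨l, k, congrArg Prod.fst he, congrArg Prod.snd he, Or.inl hl⟩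
  · rcases (mem_halfWheel _).1 h1 with ⟨k, hk⟩ | ⟨k, l, hl, he⟩
    · have hv : v = none := congrArg Prod.fst hk
      exact absurd (hv ▸ h) (no_in_root hor hroot _)
    · exact Or.inr ⟨k, l, congrArg Prod.snd he, congrArg Prod.fst he, Or.inr hl⟩

lemma mem_VC {k : Fin n} : k ∈ halfWheelVC n X ↔
    ∃ l : Fin n, ((k:ℕ) = (l:ℕ) + 1 ∨ (l:ℕ) = (k:ℕ) + 1) ∧ (some l, some k) ∈ X.E := by
  simp [halfWheelVC]

lemma conf_spoke {k l : Fin n} (hadj : (k:ℕ) = (l:ℕ) + 1 ∨ (l:ℕ) = (k:ℕ) + 1)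
    (hE : ((some l : Option (Fin n)), some k) ∈ X.E) :
    IsConfluence X.E none (some k) [none, some k] [none, some l, some k] := by
  have hlk : l ≠ k := by
    intro h
    subst h
    omega
  refine ⟨by simp, by simp, ?_, ?_, ?_⟩
  · exact ⟨by simp, rfl, rfl, by simp, by
      intro e he
      simp [pathEdges] at he
      subst he
      exact spoke_mem hor hroot k⟩
  · refine ⟨by simp, rfl, rfl, by simp [hlk, Option.some_inj], ?_⟩
    intro e he
    simp [pathEdges] at he
    rcases he with rfl | rfl
    · exact spoke_mem hor hroot l
    · exact hE
  · intro v hv1 hv2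
    simp only [List.mem_cons, List.not_mem_nil, or_false] at hv1
    rcases hv1 with rfl | rfl
    · exact Or.inl rfl
    · exact Or.inr rfl

lemma labeled_spokes {k l : Fin n} (hadj : (k:ℕ) = (l:ℕ) + 1 ∨ (l:ℕ) = (k:ℕ) + 1)
    (hE : ((some l : Option (Fin n)), some k) ∈ X.E) :
    IsLabeled X.E (none, some k) (some k) ∧ IsLabeled X.E (none, some l) (some k) := by
  have hc := conf_spoke hor hroot hadj hE
  constructor
  · exact ⟨none, _, _, hc, Or.inl (by simp [pathEdges])⟩
  · exact ⟨none, _, _, hc, Or.inr (by simp [pathEdges])⟩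

lemma confluence_target {i j : Option (Fin n)} {p₁ p₂ : List (Option (Fin n))}
    (hc : IsConfluence X.E i j p₁ p₂) : ∃ k : Fin n, j = some k ∧ k ∈ halfWheelVC n X := by
  obtain ⟨hij, hpp, hp1, hp2, hdisj⟩ := hc
  obtain ⟨a₁, ha₁E, ha₁p, ha₁j, ha₁i⟩ := last_edge hp1 hij
  obtain ⟨a₂, ha₂E, ha₂p, ha₂j, ha₂i⟩ := last_edge hp2 hij
  have haa : a₁ ≠ a₂ := by
    intro h
    subst h
    rcases hdisj _ ha₁p ha₂p with rfl | rfl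
    · exact hpp ((ha₁i rfl).trans (ha₂i rfl).symm)
    · exact ha₁j rfl
  obtain ⟨k, hk⟩ : ∃ k : Fin n, j = some k := by
    rcases edge_structure hor hroot ha₁E with ⟨k, _, hk⟩ | ⟨k, l, _, hk, _⟩ <;> exact ⟨k, hk⟩
  subst hk
  refine ⟨k, rfl, (mem_VC hor hroot).2 ?_⟩
  rcases edge_structure hor hroot ha₁E with ⟨k₁, hu₁, hv₁⟩ | ⟨k₁, l₁, hu₁, hv₁, hadj₁⟩
  · rcases edge_structure hor hroot ha₂E with ⟨k₂, hu₂, hv₂⟩ | ⟨k₂, l₂, hu₂, hv₂, hadj₂⟩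
    · exact absurd (hu₁.trans hu₂.symm) haa
    · rw [Option.some_inj] at hv₂
      subst hv₂
      exact ⟨l₂, by omega, hu₂ ▸ ha₂E⟩
  · rw [Option.some_inj] at hv₁
    subst hv₁
    exact ⟨l₁, by omega, hu₁ ▸ ha₁E⟩

lemma spokes_share {a b : Fin n} (hab : (b:ℕ) = (a:ℕ) + 1) :
    (labelSet X.E ((none : Option (Fin n)), some a) ∩
      labelSet X.E ((none : Option (Fin n)), some b)).Nonempty := by
  have hmem : ((some a : Option (Fin n)), some b) ∈ halfWheel n :=
    (mem_halfWheel _).2 (Or.inr ⟨a, b, hab, rfl⟩)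
  rcases hor.2 _ _ hmem with h | h
  · obtain ⟨h1, h2⟩ := labeled_spokes hor hroot (k := b) (l := a) (Or.inl hab) h
    exact ⟨some b, h2, h1⟩
  · obtain ⟨h1, h2⟩ := labeled_spokes hor hroot (k := a) (l := b) (Or.inr hab) h
    exact ⟨some a, h1, h2⟩

lemma spokes_conn (a b : Fin n) :
    inSameBag X.E ((none : Option (Fin n)), some a) ((none : Option (Fin n)), some b) := by
  set r : (Option (Fin n) × Option (Fin n)) → (Option (Fin n) × Option (Fin n)) → Prop :=
    fun p q => p ∈ X.E ∧ q ∈ X.E ∧ p.1 = (none : Option (Fin n)) ∧ q.1 = none ∧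
      (labelSet X.E p ∩ labelSet X.E q).Nonempty with hr
  have hsymm : Symmetric r := by
    rintro p q ⟨h1, h2, h3, h4, h5⟩
    exact ⟨h2, h1, h4, h3, by rwa [Set.inter_comm]⟩
  have hstep : ∀ c d : Fin n, (d:ℕ) = (c:ℕ) + 1 →
      r (none, some c) (none, some d) := by
    intro c d hcd
    exact ⟨spoke_mem hor hroot c, spoke_mem hor hroot d, rfl, rfl, spokes_share hor hroot hcd⟩
  have up : ∀ d : ℕ, ∀ c : Fin n, ∀ h : (c:ℕ) + d < n,
      Relation.ReflTransGen r (none, some c) (none, some ⟨(c:ℕ) + d, h⟩) := by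
    intro d
    induction d with
    | zero =>
      intro c h
      have : (⟨(c:ℕ) + 0, h⟩ : Fin n) = c := Fin.ext (by simp)
      rw [this]
    | succ d ih =>
      intro c h
      exact (ih c (by omega)).tail (hstep ⟨(c:ℕ)+d, by omega⟩ ⟨(c:ℕ)+d+1, by omega⟩ rfl)
  have key : ∀ a b : Fin n, Relation.ReflTransGen r (none, some a) (none, some b) := by
    intro a b
    rcases le_or_gt (a:ℕ) (b:ℕ) with hle | hlt
    · have := up ((b:ℕ) - (a:ℕ)) a (by omega)
      have hb : (⟨(a:ℕ) + ((b:ℕ) - (a:ℕ)), by omega⟩ : Fin n) = b := Fin.ext (by simp; omega)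
      rwa [hb] at this
    · have := up ((a:ℕ) - (b:ℕ)) b (by omega)
      have ha : (⟨(b:ℕ) + ((a:ℕ) - (b:ℕ)), by omega⟩ : Fin n) = a := Fin.ext (by simp; omega)
      rw [ha] at this
      haveI hS : Std.Symm r := ⟨fun _ _ h => hsymm h⟩; exact Std.Symm.symm _ _ this
  exact key a b

end HalfWheelFacts

/-- For any extraction order of the half wheel rooted at the center, the
width equals `|VC| + 1`; the labels appearing on edges are exactly the vertices of `VC`,
and they all belong to a single edge bag of the center. -/
theorem stmt5 (n : ℕ) (X : ExtractionOrder (Option (Fin n)))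
    (hor : IsOrientationOf X.E (halfWheel n)) (hroot : X.root = none) :
    widthX X = (halfWheelVC n X).card + 1 ∧
    {j | ∃ e ∈ X.E, IsLabeled X.E e j} = {j | ∃ k ∈ halfWheelVC n X, j = some k} ∧
    ((halfWheelVC n X).Nonempty →
      ∃ e₀ ∈ X.E, e₀.1 = (none : Option (Fin n)) ∧
        ∀ j, (∃ e ∈ X.E, IsLabeled X.E e j) → j ∈ bagLabels X.E e₀) := by
  classical
  set VC := halfWheelVC n X with hVC
  have hsub : ∀ e j, IsLabeled X.E e j → ∃ k ∈ VC, j = some k := by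
    rintro e j ⟨i, p₁, p₂, hc, -⟩
    obtain ⟨k, rfl, hk⟩ := confluence_target hor hroot hc
    exact ⟨k, hk, rfl⟩
  have hlab : ∀ k ∈ VC, IsLabeled X.E ((none : Option (Fin n)), some k) (some k) := by
    intro k hk
    obtain ⟨l, hadj, hE⟩ := (mem_VC hor hroot).1 hk
    exact (labeled_spokes hor hroot hadj hE).1
  have part2 : {j | ∃ e ∈ X.E, IsLabeled X.E e j} = {j | ∃ k ∈ VC, j = some k} := by
    ext j
    constructor
    · rintro ⟨e, he, hl⟩
      exact hsub e j hl
    · rintro ⟨k, hk, rfl⟩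
      exact ⟨(none, some k), spoke_mem hor hroot k, hlab k hk⟩
  have hbag : ∀ k₀ : Fin n, ∀ j, (∃ k ∈ VC, j = some k) →
      j ∈ bagLabels X.E ((none : Option (Fin n)), some k₀) := by
    rintro k₀ j ⟨k, hk, rfl⟩
    exact ⟨(none, some k), spokes_conn hor hroot k₀ k, hlab k hk⟩
  have hLset : {j | ∃ k ∈ VC, j = some k} = ↑(VC.image some) := by
    ext j
    simp [eq_comm]
  have hcard : ({j | ∃ k ∈ VC, j = some k}).ncard = VC.card := by
    rw [hLset, Set.ncard_coe_finset, Finset.card_image_of_injective _ (Option.some_injective _)]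
  have hub : ∀ e ∈ X.E, (bagLabels X.E e).ncard ≤ VC.card := by
    intro e he
    have hss : bagLabels X.E e ⊆ {j | ∃ k ∈ VC, j = some k} := by
      rintro j ⟨e', -, hl⟩
      exact hsub e' j hl
    calc (bagLabels X.E e).ncard ≤ ({j | ∃ k ∈ VC, j = some k}).ncard :=
          Set.ncard_le_ncard hss (hLset ▸ (VC.image some).finite_toSet)
      _ = VC.card := hcard
  have hsup : X.E.sup (fun e => (bagLabels X.E e).ncard) = VC.card := by
    rcases VC.eq_empty_or_nonempty with hemp | ⟨k₀, hk₀⟩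
    · have h0 : VC.card = 0 := by rw [hemp]; rfl
      rw [h0]
      exact Nat.le_zero.1 (Finset.sup_le (fun e he => h0 ▸ hub e he))
    · apply le_antisymm (Finset.sup_le hub)
      have he₀ : ((none : Option (Fin n)), some k₀) ∈ X.E := spoke_mem hor hroot k₀
      have hbeq : bagLabels X.E ((none : Option (Fin n)), some k₀) =
          {j | ∃ k ∈ VC, j = some k} := by
        apply Set.Subset.antisymm
        · rintro j ⟨e', -, hl⟩
          exact hsub e' j hl
        · intro j hj
          exact hbag k₀ j hj
      calc VC.card = (bagLabels X.E ((none : Option (Fin n)), some k₀)).ncard := by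
            rw [hbeq, hcard]
        _ ≤ _ := Finset.le_sup (f := fun e => (bagLabels X.E e).ncard) he₀
  refine ⟨by rw [widthX, hsup]; omega, part2, ?_⟩
  rintro ⟨k₀, hk₀⟩
  refine ⟨(none, some k₀), spoke_mem hor hroot k₀, rfl, ?_⟩
  rintro j ⟨e, he, hl⟩
  exact hbag k₀ j (hsub e j hl)
end

section
/- Let G^X = (V, E^X, s) be an extraction order and let e = (k, l) be an edge not lying on either path of a given confluence C = P1 ⊔ P2 from i to j, but such that e lies on some directed path from i to j. Then there exists a confluence with target j containing e. -/
/-!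
Take a path from `i` to `j` through `e = (k, l)`. Let `a` be its last vertex on the confluence
up to `k` and `b` its first one from `l` on: the segment from `a` to `b` is a bridge carrying `e`
whose interior avoids the confluence. Say `b ∈ p₁`; then `b ≠ i`. By acyclicity `a` cannot come
after `b` on `p₁`. If `a ∈ p₂`, the bridge followed by `p₁` from `b` and `p₂` from `a` form a
confluence from `a` to `j`; otherwise `a` precedes `b` on `p₁`, and replacing the segment of `p₁`
from `a` to `b` by the bridge gives, together with `p₂`, a confluence from `i` to `j`.
-/

section Paths

variable {V : Type*} {E : Finset (V × V)}

@[simp] lemma pathEdges_cons_cons (x y : V) (t : List V) :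
    pathEdges (x :: y :: t) = (x, y) :: pathEdges (y :: t) := rfl

lemma pathEdges_append_cons (u : List V) (a : V) (v : List V) :
    pathEdges (u ++ a :: v) = pathEdges (u ++ [a]) ++ pathEdges (a :: v) := by
  induction u with
  | nil => rfl
  | cons x u ih => cases u <;> simp_all

lemma mem_pathEdges_iff {p : List V} {x y : V} :
    (x, y) ∈ pathEdges p ↔ ∃ s t, p = s ++ x :: y :: t := by
  constructor
  · intro h
    induction p with
    | nil => simp [pathEdges] at h
    | cons z p ih =>
      rcases p with _ | ⟨z', t⟩
      · simp [pathEdges] at h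
      rcases List.mem_cons.1 h with h | h
      · obtain ⟨rfl, rfl⟩ := Prod.mk.inj h
        exact ⟨[], t, rfl⟩
      · obtain ⟨s, t', hst⟩ := ih h
        exact ⟨z :: s, t', by simp [hst]⟩
  · rintro ⟨s, t, rfl⟩
    rw [pathEdges_append_cons]
    simp

lemma mem_pathEdges_append {xs ys : List V} {x y : V}
    (hx : xs.getLast? = some x) (hy : ys.head? = some y) :
    (x, y) ∈ pathEdges (xs ++ ys) := by
  obtain ⟨xs', rfl⟩ := List.getLast?_eq_some_iff.1 hx
  obtain ⟨ys', rfl⟩ := List.head?_eq_some_iff.1 hy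
  exact mem_pathEdges_iff.2 ⟨xs', ys', by simp⟩

lemma pathEdges_subset_of_infix {p q : List V} (h : p <:+: q) :
    pathEdges p ⊆ pathEdges q := by
  obtain ⟨u, w, rfl⟩ := h
  rintro ⟨x, y⟩ hxy
  obtain ⟨s, t, rfl⟩ := mem_pathEdges_iff.1 hxy
  exact mem_pathEdges_iff.2 ⟨u ++ s, t ++ w, by simp⟩

lemma List.exists_first_of_exists {l : List V} {P : V → Prop} (h : ∃ x ∈ l, P x) :
    ∃ u a w, l = u ++ a :: w ∧ P a ∧ ∀ v ∈ u, ¬ P v := by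
  classical
  obtain ⟨a, ha⟩ := Option.isSome_iff_exists.1 (List.find?_isSome (p := fun x => decide (P x)).2
    (by simpa using h))
  obtain ⟨hPa, u, w, rfl, hu⟩ := List.find?_eq_some_iff_append.1 ha
  exact ⟨u, a, w, rfl, by simpa using hPa, by simpa using hu⟩

lemma List.exists_last_of_exists {l : List V} {P : V → Prop} (h : ∃ x ∈ l, P x) :
    ∃ u a w, l = u ++ a :: w ∧ P a ∧ ∀ v ∈ w, ¬ P v := by
  obtain ⟨u, a, w, hl, hPa, hu⟩ := List.exists_first_of_exists (l := l.reverse) (by simpa using h)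
  refine ⟨w.reverse, a, u.reverse, ?_, hPa, by simpa using hu⟩
  simpa using congrArg List.reverse hl

namespace IsPath

lemma head_mem {x y : V} {p : List V} (h : IsPath E x y p) : x ∈ p :=
  List.mem_of_mem_head? h.2.1

lemma getLast_mem {x y : V} {p : List V} (h : IsPath E x y p) : y ∈ p :=
  List.mem_of_mem_getLast? h.2.2.1

lemma of_infix {x y x' y' : V} {p q : List V} (h : IsPath E x y q) (hpq : p <:+: q)
    (hx : p.head? = some x') (hy : p.getLast? = some y') : IsPath E x' y' p :=
  ⟨by rintro rfl; simp at hx, hx, hy, h.2.2.2.1.sublist hpq.sublist,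
    fun e he => h.2.2.2.2 e (pathEdges_subset_of_infix hpq he)⟩

end IsPath

lemma isPath_append_cons_iff {x y a : V} {u v : List V} :
    IsPath E x y (u ++ a :: v) ↔
      IsPath E x a (u ++ [a]) ∧ IsPath E a y (a :: v) ∧ ∀ z ∈ u, z ∉ a :: v := by
  rw [IsPath, pathEdges_append_cons]
  simp only [IsPath, List.mem_append, List.head?_append, List.getLast?_append, List.nodup_append,
    List.getLast?_cons, Option.some_or, List.head?_cons]
  grind

def Reaches (E : Finset (V × V)) (x y : V) : Prop := ∃ p, IsPath E x y p

def IsAcyclic (E : Finset (V × V)) : Prop := ∀ u v, (u, v) ∈ E → ¬ Reaches E v u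

lemma IsPath.reaches_of_mem {x y v : V} {p : List V} (h : IsPath E x y p) (hv : v ∈ p) :
    Reaches E x v ∧ Reaches E v y := by
  obtain ⟨s, t, rfl⟩ := List.append_of_mem hv
  obtain ⟨hxv, hvy, -⟩ := isPath_append_cons_iff.1 h
  exact ⟨⟨_, hxv⟩, ⟨_, hvy⟩⟩

lemma Reaches.trans {x m y : V} (h₁ : Reaches E x m) (h₂ : Reaches E m y) : Reaches E x y := by
  obtain ⟨p, hp⟩ := h₁
  obtain ⟨q, hq⟩ := h₂
  -- cut `p` at its first vertex on `q`
  obtain ⟨u, v, w, rfl, hvq, hu⟩ :=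
    List.exists_first_of_exists (P := (· ∈ q)) ⟨m, hp.getLast_mem, hq.head_mem⟩
  obtain ⟨q₁, q₂, rfl⟩ := List.append_of_mem hvq
  have hxv := (isPath_append_cons_iff.1 hp).1
  have hvy := (isPath_append_cons_iff.1 hq).2.1
  exact ⟨_, isPath_append_cons_iff.2 ⟨hxv, hvy, fun z hz hz' => hu z hz (by simp_all)⟩⟩

lemma IsAcyclic.not_reaches_of_mem_pathEdges (hE : IsAcyclic E) {a b : V} {p : List V}
    {e : V × V} (hp : IsPath E a b p) (he : e ∈ pathEdges p) : ¬ Reaches E b a := by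
  intro hba
  obtain ⟨k, l⟩ := e
  obtain ⟨s, t, rfl⟩ := mem_pathEdges_iff.1 he
  have hak := (hp.reaches_of_mem (v := k) (by simp)).1
  have hlb := (hp.reaches_of_mem (v := l) (by simp)).2
  exact hE k l (hp.2.2.2.2 _ he) (hlb.trans (hba.trans hak))

lemma IsPath.exists_bridge {x y k l : V} {q : List V} (hq : IsPath E x y q)
    (he : (k, l) ∈ pathEdges q) (P : V → Prop) (hx : P x) (hy : P y) :
    ∃ a w b, IsPath E a b (a :: w ++ [b]) ∧ (k, l) ∈ pathEdges (a :: w ++ [b]) ∧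
      P a ∧ P b ∧ (∀ v ∈ w, ¬ P v) ∧ a ≠ y ∧ b ≠ x := by
  obtain ⟨s, t, rfl⟩ := mem_pathEdges_iff.1 he
  have hq' : IsPath E x y ((s ++ [k]) ++ l :: t) := by simpa using hq
  have hxk := (isPath_append_cons_iff.1 hq).1
  have hly := (isPath_append_cons_iff.1 hq').2.1
  have hdisj := List.disjoint_of_nodup_append hq'.2.2.2.1
  obtain ⟨u, a, w₁, hpre, hPa, hw₁⟩ := List.exists_last_of_exists ⟨x, hxk.head_mem, hx⟩
  obtain ⟨w₂, b, t', hsuf, hPb, hw₂⟩ := List.exists_first_of_exists ⟨y, hly.getLast_mem, hy⟩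
  have ha : a ∈ s ++ [k] := by simp [hpre]
  have hb : b ∈ l :: t := by simp [hsuf]
  have hmid : (s ++ [k]) ++ l :: t = u ++ ((a :: w₁) ++ (w₂ ++ [b])) ++ t' := by
    rw [hpre, hsuf]; simp
  refine ⟨a, w₁ ++ w₂, b,
    hq'.of_infix ⟨u, t', by simpa using hmid.symm⟩ (by simp) (by simp [List.getLast?_cons]), ?_, hPa, hPb, ?_, fun h => hdisj ha (h ▸ hly.getLast_mem),
    fun h => hdisj hxk.head_mem (h ▸ hb)⟩
  · have hk : (a :: w₁).getLast? = some k := by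
      simpa [List.getLast?_append, List.getLast?_cons] using (congrArg List.getLast? hpre).symm
    have hl : (w₂ ++ [b]).head? = some l := by
      simpa [List.head?_append] using (congrArg List.head? hsuf).symm
    simpa using mem_pathEdges_append hk hl
  · simp only [List.mem_append]
    rintro v (hv | hv)
    exacts [hw₁ v hv, hw₂ v hv]

lemma IsConfluence.symm {i j : V} {p₁ p₂ : List V} (h : IsConfluence E i j p₁ p₂) :
    IsConfluence E i j p₂ p₁ :=
  ⟨h.1, h.2.1.symm, h.2.2.2.1, h.2.2.1, fun v h₂ h₁ => h.2.2.2.2 v h₁ h₂⟩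

section Rerouting

variable {i j a b : V} {r t w p₂ : List V} {e : V × V}

lemma IsConfluence.isLabeled_of_detour_from_right (hC : IsConfluence E i j (r ++ b :: t) p₂)
    (hbi : b ≠ i) (haj : a ≠ j) (ha₂ : a ∈ p₂) (hP : IsPath E a j (a :: w ++ b :: t))
    (hw : ∀ v ∈ w, ¬ (v ∈ r ++ b :: t ∨ v ∈ p₂)) (he : e ∈ pathEdges (a :: w ++ b :: t))
    (hne : e ∉ pathEdges p₂) : IsLabeled E e j := by
  obtain ⟨-, -, hp₁, hp₂, hmeet⟩ := hC
  obtain ⟨hib, -, hrt⟩ := isPath_append_cons_iff.1 hp₁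
  have htp₂ : ∀ v ∈ b :: t, v ∈ p₂ → v = j := by
    intro v hv hv₂
    refine (hmeet v (List.mem_append_right r hv) hv₂).resolve_left ?_
    rintro rfl
    rcases List.mem_append.1 hib.head_mem with hir | hvb
    exacts [hrt v hir hv, hbi (List.mem_singleton.1 hvb).symm]
  obtain ⟨u₂, t₂, rfl⟩ := List.append_of_mem ha₂
  have hQ := (isPath_append_cons_iff.1 hp₂).2.1
  refine ⟨a, _, _, ⟨haj, fun h => hne ?_, hP, hQ, ?_⟩, Or.inl he⟩
  · exact pathEdges_subset_of_infix ⟨u₂, [], by simp⟩ (h ▸ he)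
  · intro v hvP hvQ
    have hv₂ : v ∈ u₂ ++ a :: t₂ := List.mem_append_right _ hvQ
    rcases List.mem_cons.1 hvP with rfl | hvP
    · exact Or.inl rfl
    rcases List.mem_append.1 hvP with hvw | hvt
    exacts [absurd (Or.inr hv₂) (hw v hvw), Or.inr (htp₂ v hvt hv₂)]

lemma IsConfluence.isLabeled_of_splice {r₂ : List V}
    (hC : IsConfluence E i j (r ++ a :: r₂ ++ b :: t) p₂) (hP : IsPath E a j (a :: w ++ b :: t))
    (hw : ∀ v ∈ w, ¬ (v ∈ r ++ a :: r₂ ++ b :: t ∨ v ∈ p₂))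
    (he : e ∈ pathEdges (a :: w ++ b :: t)) (hne : e ∉ pathEdges p₂) : IsLabeled E e j := by
  obtain ⟨hij, -, hp₁, hp₂, hmeet⟩ := hC
  obtain ⟨-, -, hrt⟩ := isPath_append_cons_iff.1 hp₁
  obtain ⟨hia, -, hra⟩ := isPath_append_cons_iff.1 (by simpa using hp₁ :
    IsPath E i j (r ++ a :: (r₂ ++ b :: t)))
  have hP' : IsPath E i j (r ++ a :: (w ++ b :: t)) := by
    refine isPath_append_cons_iff.2 ⟨hia, hP, ?_⟩
    intro z hz hz'
    have hzp₁ : z ∈ r ++ a :: r₂ := List.mem_append_left _ hz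
    rcases List.mem_cons.1 hz' with rfl | hz'
    · exact hra z hz List.mem_cons_self
    rcases List.mem_append.1 hz' with hzw | hzt
    exacts [hw z hzw (Or.inl (List.mem_append_left _ hzp₁)), hrt z hzp₁ hzt]
  have he' : e ∈ pathEdges (r ++ a :: (w ++ b :: t)) :=
    pathEdges_subset_of_infix ⟨r, [], by simp⟩ he
  refine ⟨i, _, p₂, ⟨hij, fun h => hne (h ▸ he'), hP', hp₂, ?_⟩, Or.inl he'⟩
  intro v hvP hv₂
  have hv : v ∈ w ∨ v ∈ r ++ a :: r₂ ++ b :: t := by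
    simp only [List.mem_append, List.mem_cons] at hvP ⊢
    tauto
  rcases hv with hvw | hvp₁
  exacts [absurd (Or.inr hv₂) (hw v hvw), hmeet v hvp₁ hv₂]

end Rerouting

lemma IsConfluence.isLabeled_of_bridge (hE : IsAcyclic E) {i j a b : V} {p₁ p₂ w : List V}
    {e : V × V} (hC : IsConfluence E i j p₁ p₂) (hab : IsPath E a b (a :: w ++ [b]))
    (he : e ∈ pathEdges (a :: w ++ [b])) (hw : ∀ v ∈ w, ¬ (v ∈ p₁ ∨ v ∈ p₂))
    (hne : e ∉ pathEdges p₂) (hb : b ∈ p₁) (hbi : b ≠ i) (haj : a ≠ j)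
    (ha : a ∈ p₁ ∨ a ∈ p₂) : IsLabeled E e j := by
  obtain ⟨r, t, rfl⟩ := List.append_of_mem hb
  have hbj := (isPath_append_cons_iff.1 hC.2.2.1).2.1
  have hat : a ∉ b :: t := fun h =>
    hE.not_reaches_of_mem_pathEdges hab he (hbj.reaches_of_mem h).1
  have hP : IsPath E a j (a :: w ++ b :: t) := by
    refine isPath_append_cons_iff.2 ⟨hab, hbj, ?_⟩
    rintro z (_ | ⟨_, hz⟩) hz'
    exacts [hat hz', hw z hz (Or.inl (List.mem_append_right r hz'))]
  have heP : e ∈ pathEdges (a :: w ++ b :: t) := pathEdges_subset_of_infix ⟨[], t, by simp⟩ he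
  by_cases ha₂ : a ∈ p₂
  · exact hC.isLabeled_of_detour_from_right hbi haj ha₂ hP hw heP hne
  · obtain ⟨r₁, r₂, rfl⟩ := List.append_of_mem
      ((List.mem_append.1 (ha.resolve_right ha₂)).resolve_right hat)
    exact hC.isLabeled_of_splice hP hw heP hne

end Paths

theorem stmt14_general {V : Type*} (X : ExtractionOrder V) (i j : V) (p₁ p₂ : List V)
    (hC : IsConfluence X.E i j p₁ p₂) (e : V × V)
    (hne₁ : e ∉ pathEdges p₁) (hne₂ : e ∉ pathEdges p₂)
    (hon : OnPath X.E i j e) :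
    IsLabeled X.E e j := by
  obtain ⟨q, hq, heq⟩ := hon
  obtain ⟨a, w, b, hab, he, ha, hb, hw, haj, hbi⟩ :=
    hq.exists_bridge heq (fun v => v ∈ p₁ ∨ v ∈ p₂) (Or.inl hC.2.2.1.head_mem)
      (Or.inl hC.2.2.1.getLast_mem)
  rcases hb with hb₁ | hb₂
  · exact hC.isLabeled_of_bridge X.acyclic hab he hw hne₂ hb₁ hbi haj ha
  · exact hC.symm.isLabeled_of_bridge X.acyclic hab he (fun v hv h => hw v hv h.symm) hne₁ hb₂
      hbi haj ha.symm

/-- If `e` does not lie on either path of a given confluence from `i` to `j`,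
but lies on some directed path from `i` to `j`, then some confluence with target `j`
contains `e`. -/
theorem stmt14 {V : Type*} (X : ExtractionOrder V) (i j : V) (p₁ p₂ : List V)
    (hC : IsConfluence X.E i j p₁ p₂) (e : V × V) (he : e ∈ X.E)
    (hne₁ : e ∉ pathEdges p₁) (hne₂ : e ∉ pathEdges p₂)
    (hon : OnPath X.E i j e) :
    IsLabeled X.E e j :=
  stmt14_general X i j p₁ p₂ hC e hne₁ hne₂ hon
end
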